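/- Existence of a perfect order embedding: for any n, there exists D (the number of isomorphism classes of node-anchored graphs on at most n vertices) and a map z from node-anchored graphs on at most n vertices to ℕ^D such that z(G_Q) ≤ z(G) componentwise if and only if G_Q is an anchored subgraph of G. Concretely, the map sending G to its vector of anchored-subgraph counts of all such isomorphism classes works. -/
import Mathlib


open Function

/-- A node-anchored graph on at most `n` vertices: a vertex count `m + 1 ≤ n`,
a simple graph on `Fin (m + 1)`, and an anchor vertex. -/
def AnchGraph (n : ℕ) : Type := Σ m : Fin n, SimpleGraph (Fin (m + 1)) × Fin (m + 1)

/-- Anchored subgraph relation between node-anchored graphs. -/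
def AnchSub {n : ℕ} (A B : AnchGraph n) : Prop :=
  ∃ f : Fin (A.1 + 1) → Fin (B.1 + 1), Injective f ∧ f A.2.2 = B.2.2 ∧
    ∀ u w, A.2.1.Adj u w → B.2.1.Adj (f u) (f w)

noncomputable instance (n : ℕ) : Fintype (AnchGraph n) := by
  unfold AnchGraph
  classical
  infer_instance

lemma AnchSub.refl {n : ℕ} (A : AnchGraph n) : AnchSub A A :=
  ⟨id, injective_id, rfl, fun _ _ h => h⟩

lemma AnchSub.trans {n : ℕ} {A B C : AnchGraph n} (h1 : AnchSub A B) (h2 : AnchSub B C) :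
    AnchSub A C := by
  obtain ⟨f, hf, hfa, hfe⟩ := h1
  obtain ⟨g, hg, hga, hge⟩ := h2
  exact ⟨g ∘ f, hg.comp hf, by simp [hfa, hga], fun u w h => hge _ _ (hfe _ _ h)⟩

/-- Existence of a perfect order embedding: the node-anchored graphs on at most
`n` vertices can be embedded into `ℕ^D` (for a suitable dimension `D`) such that
the componentwise order exactly captures the anchored subgraph relation. -/
theorem exists_perfect_order_embedding (n : ℕ) :
    ∃ (D : ℕ) (z : AnchGraph n → Fin D → ℕ),
      ∀ GQ G : AnchGraph n, (∀ i, z GQ i ≤ z G i) ↔ AnchSub GQ G := by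
  classical
  obtain ⟨e⟩ : Nonempty (AnchGraph n ≃ Fin (Fintype.card (AnchGraph n))) :=
    ⟨Fintype.equivFin _⟩
  refine ⟨Fintype.card (AnchGraph n),
    fun G i => if AnchSub (e.symm i) G then 1 else 0, fun GQ G => ?_⟩
  constructor
  · intro h
    have := h (e GQ)
    simp only [Equiv.symm_apply_apply] at this
    by_contra hc
    simp [AnchSub.refl GQ, hc] at this
  · intro h i
    by_cases hi : AnchSub (e.symm i) GQ
    · simp [hi, AnchSub.trans hi h]
    · simp [hi]
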